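/- For any probability measure μ on (0,∞), the Gaussian scale mixture density π(θ) = ∫₀^∞ (1/(σ√(2π)))·exp(−θ²/(2σ²)) dμ(σ) admits a scale mixture of uniforms representation: π(θ) = ∫₀^∞ (1/(2t))·1{|θ| < t} dν(t) for all θ ∈ ℝ, where ν is the law of the product σ·√V with σ distributed according to μ and V an independent Gamma(3/2, 1/2) random variable (shape 3/2, rate 1/2). In particular, every scale mixture of Gaussians is a scale mixture of uniforms. -/

import Mathlib

open MeasureTheory ProbabilityTheory Set

/-!
Fix `σ > 0`. Since `|θ| < σ√v ↔ v > θ²/σ²`, and the Gamma(3/2, 1/2) density is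
`√v e^{-v/2} / √(2π)`, the factor `√v` cancels the height `1/(2σ√v)` of the uniform density, so
`E[(2σ√V)⁻¹ 1{|θ| < σ√V}] = (2σ√(2π))⁻¹ ∫_{θ²/σ²}^∞ e^{-v/2} dv = e^{-θ²/(2σ²)} / (σ√(2π))`.
Integrating this identity over `σ ∼ μ` (Tonelli) gives the theorem.
-/

noncomputable def uniformDensity (θ t : ℝ) : ℝ :=
  1 / (2 * t) * if |θ| < t then 1 else 0

noncomputable def gaussianDensity (θ σ : ℝ) : ℝ :=
  1 / (σ * Real.sqrt (2 * Real.pi)) * Real.exp (-θ ^ 2 / (2 * σ ^ 2))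

lemma uniformDensity_nonneg (θ t : ℝ) : 0 ≤ uniformDensity θ t := by
  unfold uniformDensity
  split_ifs with h
  · have : 0 < t := (abs_nonneg θ).trans_lt h
    positivity
  · simp

lemma measurable_uniformDensity (θ : ℝ) : Measurable (uniformDensity θ) := by
  unfold uniformDensity
  refine Measurable.mul (by fun_prop) (Measurable.ite ?_ measurable_const measurable_const)
  exact measurableSet_lt measurable_const measurable_id

lemma measurable_gaussianDensity (θ : ℝ) : Measurable (gaussianDensity θ) := by
  unfold gaussianDensity
  fun_prop

lemma gaussianDensity_nonneg (θ : ℝ) {σ : ℝ} (hσ : 0 ≤ σ) : 0 ≤ gaussianDensity θ σ := by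
  unfold gaussianDensity
  positivity

lemma gammaPDFReal_three_halves_one_half {v : ℝ} (hv : 0 ≤ v) :
    gammaPDFReal (3 / 2) (1 / 2) v =
      Real.sqrt v * Real.exp (-(1 / 2) * v) / Real.sqrt (2 * Real.pi) := by
  have hΓ : Real.Gamma (3 / 2) = Real.sqrt Real.pi / 2 := by
    rw [show (3 / 2 : ℝ) = 1 / 2 + 1 by norm_num, Real.Gamma_add_one (by norm_num),
      Real.Gamma_one_half_eq]
    ring
  have hrate : (1 / 2 : ℝ) ^ (3 / 2 : ℝ) = 1 / 2 * (Real.sqrt 2)⁻¹ := by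
    rw [show (3 / 2 : ℝ) = 1 + 1 / 2 by norm_num, Real.rpow_add (by norm_num), Real.rpow_one,
      ← Real.sqrt_eq_rpow, one_div 2, Real.sqrt_inv]
  have hshape : v ^ (3 / 2 - 1 : ℝ) = Real.sqrt v := by
    rw [Real.sqrt_eq_rpow]; norm_num
  rw [gammaPDFReal, if_pos hv, hΓ, hrate, hshape, Real.sqrt_mul (by norm_num), neg_mul]
  have : 0 < Real.sqrt Real.pi := Real.sqrt_pos.mpr Real.pi_pos
  field_simp

lemma abs_lt_mul_sqrt_iff {σ : ℝ} (hσ : 0 < σ) (θ v : ℝ) :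
    |θ| < σ * Real.sqrt v ↔ θ ^ 2 / σ ^ 2 < v := by
  rw [mul_comm, ← div_lt_iff₀ hσ, Real.lt_sqrt (by positivity), div_pow, sq_abs]

lemma gammaPDFReal_mul_uniformDensity {σ : ℝ} (hσ : 0 < σ) (θ v : ℝ) :
    gammaPDFReal (3 / 2) (1 / 2) v * uniformDensity θ (σ * Real.sqrt v) =
      (Ioi (θ ^ 2 / σ ^ 2)).indicator
        (fun v => 1 / (2 * σ * Real.sqrt (2 * Real.pi)) * Real.exp (-(1 / 2) * v)) v := by
  simp only [indicator_apply, mem_Ioi, uniformDensity, abs_lt_mul_sqrt_iff hσ]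
  split_ifs with h
  · have hv : 0 < v := lt_of_le_of_lt (by positivity) h
    have : 0 < Real.sqrt v := Real.sqrt_pos.mpr hv
    rw [gammaPDFReal_three_halves_one_half hv.le]
    field_simp
  · simp

lemma lintegral_uniformDensity_gammaMeasure {σ : ℝ} (hσ : 0 < σ) (θ : ℝ) :
    ∫⁻ v, ENNReal.ofReal (uniformDensity θ (σ * Real.sqrt v)) ∂gammaMeasure (3 / 2) (1 / 2) =
      ENNReal.ofReal (gaussianDensity θ σ) := by
  have hmeas : Measurable fun v => ENNReal.ofReal (uniformDensity θ (σ * Real.sqrt v)) :=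
    ((measurable_uniformDensity θ).comp (by fun_prop)).ennreal_ofReal
  have hpdf : Measurable (gammaPDF (3 / 2) (1 / 2)) := (measurable_gammaPDFReal _ _).ennreal_ofReal
  rw [gammaMeasure, lintegral_withDensity_eq_lintegral_mul _ hpdf hmeas]
  simp only [Pi.mul_apply, gammaPDF, ← ENNReal.ofReal_mul (gammaPDFReal_nonneg (a := 3 / 2)
    (r := 1 / 2) (by norm_num) (by norm_num) _), gammaPDFReal_mul_uniformDensity hσ]
  rw [← ofReal_integral_eq_lintegral_ofReal
    ((integrable_indicator_iff measurableSet_Ioi).mpr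
      ((integrableOn_exp_mul_Ioi (by norm_num) _).const_mul _))
    (ae_of_all _ fun v => indicator_nonneg (fun _ _ => by positivity) v),
    integral_indicator measurableSet_Ioi, integral_const_mul, integral_exp_mul_Ioi (by norm_num),
    gaussianDensity]
  congr 1
  rw [show -(1 / 2) * (θ ^ 2 / σ ^ 2) = -θ ^ 2 / (2 * σ ^ 2) by ring]
  field_simp

theorem integral_map_prod_eq_integral_of_lintegral_eq {α β γ : Type*} [MeasurableSpace α]
    [MeasurableSpace β] [MeasurableSpace γ] {μ : Measure α} {ν : Measure β} [SFinite ν]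
    {T : α × β → γ} (hT : Measurable T) {f : γ → ℝ} (hf : Measurable f) (hf_nonneg : 0 ≤ f)
    {g : α → ℝ} (hg : AEStronglyMeasurable g μ) (hg_nonneg : 0 ≤ᵐ[μ] g)
    (hfg : ∀ᵐ x ∂μ, ∫⁻ y, ENNReal.ofReal (f (T (x, y))) ∂ν = ENNReal.ofReal (g x)) :
    ∫ z, f z ∂(μ.prod ν).map T = ∫ x, g x ∂μ := by
  rw [integral_map hT.aemeasurable hf.aestronglyMeasurable,
    integral_eq_lintegral_of_nonneg_ae (ae_of_all _ fun z => hf_nonneg (T z))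
      (hf.comp hT).aestronglyMeasurable,
    lintegral_prod (fun z => ENNReal.ofReal (f (T z))) (hf.comp hT).ennreal_ofReal.aemeasurable,
    integral_eq_lintegral_of_nonneg_ae hg_nonneg hg, lintegral_congr_ae hfg]

theorem gaussian_scale_mixture_is_uniform_scale_mixture_general
    (μ : Measure ℝ) (hsupp : μ (Iic 0) = 0) :
    ∀ θ : ℝ,
      (∫ σ, (1 / (σ * Real.sqrt (2 * Real.pi))) * Real.exp (-θ ^ 2 / (2 * σ ^ 2)) ∂μ) =
        ∫ t, (1 / (2 * t)) * (if |θ| < t then (1 : ℝ) else 0)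
          ∂(Measure.map (fun p : ℝ × ℝ => p.1 * Real.sqrt p.2)
              (μ.prod (gammaMeasure (3 / 2) (1 / 2)))) := by
  intro θ
  have hpos : ∀ᵐ σ ∂μ, 0 < σ := by
    rw [ae_iff]
    simp only [not_lt]
    exact hsupp
  have : IsProbabilityMeasure (gammaMeasure (3 / 2) (1 / 2 : ℝ)) :=
    isProbabilityMeasure_gammaMeasure (by norm_num) (by norm_num)
  symm
  exact integral_map_prod_eq_integral_of_lintegral_eq (g := gaussianDensity θ) (by fun_prop)
    (measurable_uniformDensity θ) (uniformDensity_nonneg θ)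
    (measurable_gaussianDensity θ).aestronglyMeasurable
    (hpos.mono fun σ hσ => gaussianDensity_nonneg θ hσ.le)
    (hpos.mono fun σ hσ => lintegral_uniformDensity_gammaMeasure hσ θ)

/-- Every scale mixture of Gaussians is a scale mixture of uniforms: if `μ` is a
probability measure on `(0, ∞)` (mixing over the Gaussian scale `σ`), then the
Gaussian scale mixture density equals the uniform scale mixture with mixing measure
`ν`, the law of `σ·√V` where `σ ∼ μ` and `V ∼ Gamma(3/2, 1/2)` independently. -/
theorem gaussian_scale_mixture_is_uniform_scale_mixture
    (μ : Measure ℝ) [IsProbabilityMeasure μ] (hsupp : μ (Iic 0) = 0) :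
    ∀ θ : ℝ,
      (∫ σ, (1 / (σ * Real.sqrt (2 * Real.pi))) * Real.exp (-θ ^ 2 / (2 * σ ^ 2)) ∂μ) =
        ∫ t, (1 / (2 * t)) * (if |θ| < t then (1 : ℝ) else 0)
          ∂(Measure.map (fun p : ℝ × ℝ => p.1 * Real.sqrt p.2)
              (μ.prod (gammaMeasure (3 / 2) (1 / 2)))) :=
  gaussian_scale_mixture_is_uniform_scale_mixture_general μ hsupp
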